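/- Let T be a tree, let (u_n)_{n ∈ ℕ} be a sequence of pairwise distinct vertices of T, and let H be the convex hull of the set {u_n : n ∈ ℕ} in T. Then the following conditions are equivalent: (i) H is almost a ray; (ii) for every non-degenerate labeling l : V(T) → [0,∞), if the sequence (u_n)_{n ∈ ℕ} has a Cauchy subsequence in the ultrametric space (V(T), d_l), then (u_n)_{n ∈ ℕ} is itself a Cauchy sequence in (V(T), d_l). -/

import Mathlib

open SimpleGraph

/-- `d` is an ultrametric on `V`: a metric satisfying the strong triangle inequality. -/
def IsUltrametricOn {V : Type*} (d : V → V → ℝ) : Prop :=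
  (∀ x y, 0 ≤ d x y) ∧ (∀ x y, d x y = d y x) ∧
    (∀ x y, d x y = 0 ↔ x = y) ∧
    ∀ x y z, d x y ≤ max (d x z) (d z y)

/-- The vertex labeling `l` of the graph `G` is non-degenerate:
`max {l u, l v} > 0` for every edge `{u, v}`. -/
def NondegenerateLabeling {V : Type*} (G : SimpleGraph V) (l : V → ℝ) : Prop :=
  ∀ u v, G.Adj u v → 0 < max (l u) (l v)

/-- `d` is the function `d_l` generated by the vertex labeling `l` on the tree `G`:
`d u u = 0`, and for `u ≠ v`, `d u v` is the maximum of the labels of the vertices of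
the (unique) path joining `u` and `v`. -/
def IsLabelDist {V : Type*} (G : SimpleGraph V) (l : V → ℝ) (d : V → V → ℝ) : Prop :=
  (∀ u, d u u = 0) ∧
    ∀ u v : V, u ≠ v → ∀ p : G.Walk u v, p.IsPath →
      IsGreatest (l '' {w | w ∈ p.support}) (d u v)

/-- `x` is a Cauchy sequence with respect to the distance function `d`. -/
def CauchyWith {V : Type*} (d : V → V → ℝ) (x : ℕ → V) : Prop :=
  ∀ ε : ℝ, 0 < ε → ∃ N : ℕ, ∀ m ≥ N, ∀ n ≥ N, d (x m) (x n) < ε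

/-- The set `A` is totally bounded with respect to the distance function `d`:
for every `r > 0` it is covered by finitely many open balls of radius `r` centered in `A`. -/
def TotallyBoundedWith {V : Type*} (d : V → V → ℝ) (A : Set V) : Prop :=
  ∀ r : ℝ, 0 < r → ∃ s : Finset V, ↑s ⊆ A ∧ ∀ x ∈ A, ∃ c ∈ s, d c x < r

/-- The space `V` with distance `d` is compact: every cover of `V` by open balls
(given by center–radius pairs) contains a finite subcover. -/
def CompactWith {V : Type*} (d : V → V → ℝ) : Prop :=
  ∀ F : Set (V × ℝ), (∀ x : V, ∃ p ∈ F, d p.1 x < p.2) →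
    ∃ s : Finset (V × ℝ), ↑s ⊆ F ∧ ∀ x : V, ∃ p ∈ s, d p.1 x < p.2

/-- The subgraph `R` of `G` is a ray: its vertices can be enumerated as a sequence
`f 0, f 1, …` of pairwise distinct vertices, with edges exactly `{f n, f (n+1)}`. -/
def IsRaySubgraph {V : Type*} {G : SimpleGraph V} (R : G.Subgraph) : Prop :=
  ∃ f : ℕ → V, Function.Injective f ∧ R.verts = Set.range f ∧
    ∀ x y, R.Adj x y ↔ ∃ n, (x = f n ∧ y = f (n + 1)) ∨ (x = f (n + 1) ∧ y = f n)

/-- The subgraph `T₀` of `G` is a finite subtree. -/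
def IsFiniteSubtree {V : Type*} {G : SimpleGraph V} (T₀ : G.Subgraph) : Prop :=
  T₀.verts.Finite ∧ T₀.coe.IsTree

/-- The subgraph `H` of `G` is almost a ray: `H` is the union of a ray and a finite subtree. -/
def IsAlmostRaySubgraph {V : Type*} {G : SimpleGraph V} (H : G.Subgraph) : Prop :=
  ∃ R T₀ : G.Subgraph, IsRaySubgraph R ∧ IsFiniteSubtree T₀ ∧ T₀ ⊔ R = H

/-- The graph `G` is almost a ray: `G` is the union of a ray and a finite subtree. -/
def IsAlmostRayGraph {V : Type*} (G : SimpleGraph V) : Prop :=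
  ∃ R T₀ : G.Subgraph, IsRaySubgraph R ∧ IsFiniteSubtree T₀ ∧ T₀ ⊔ R = ⊤

/-- `H` is the convex hull of the vertex set `A` in `G`: a subtree containing `A`
which is a subgraph of every subtree of `G` containing `A`. -/
def IsConvexHullSubtree {V : Type*} (G : SimpleGraph V) (A : Set V) (H : G.Subgraph) : Prop :=
  H.coe.IsTree ∧ A ⊆ H.verts ∧
    ∀ H' : G.Subgraph, H'.coe.IsTree → A ⊆ H'.verts → H ≤ H'

/-!
If `H` is a finite tree plus a ray, almost every `u n` lies on the ray, beyond any given point. The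
terms of a Cauchy subsequence go out along the ray, so the labels far out on the ray are below any
`ε`, and the whole sequence is Cauchy.

Conversely, a star–comb argument gives either a vertex `c` lying between infinitely many terms
pairwise, or a ray `r` from `u 0` with infinitely many terms beyond each `r k`. In the second case,
if only finitely many terms lie off `r`, then `H` is `r` together with the hull of those terms.
Otherwise, in both cases, there are a subsequence `u ∘ a` and infinitely many terms `u b` lying on
no path between terms of `u ∘ a`, while no edge lies on paths between arbitrarily late terms of
`u ∘ a`. Label a vertex `1 / (k + 1)` if `k` is least such that it lies on no path between
`u (a i)` and `u (a j)` for `i, j ≥ k`, and `0` if there is no such `k`. This labeling is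
non-degenerate, makes `u ∘ a` Cauchy, and gives every `u b` label `1`, so `u` is not Cauchy.
-/

lemma exists_strictMono_comp_gt (L : ℕ → ℕ) (hL : ∀ k, {n | k < L n}.Infinite) (q : ℕ) :
    ∃ a : ℕ → ℕ, StrictMono a ∧ StrictMono (L ∘ a) ∧ ∀ i, q < L (a i) := by
  obtain ⟨a, haq, ha⟩ := exists_seq_of_forall_finset_exists (fun n => q < L n)
    (fun m n => m < n ∧ L m < L n) fun s _ => by
      obtain ⟨y, hy, hsy⟩ := (hL (max q (s.sup L))).exists_gt (s.sup id)
      exact ⟨y, (le_max_left _ _).trans_lt hy, fun m hm =>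
        ⟨(Finset.le_sup (f := id) hm).trans_lt hsy,
          ((Finset.le_sup hm).trans (le_max_right _ _)).trans_lt hy⟩⟩
  exact ⟨a, fun i j h => (ha i j h).1, fun i j h => (ha i j h).2, haq⟩

/-- Either infinitely many points of `B` share one level, and `a` is taken above it, or the
levels of `B` are unbounded, and `a` is interleaved with a subsequence of `B`. -/
lemma exists_strictMono_level_ne (L : ℕ → ℕ) (hL : ∀ k, {n | k < L n}.Infinite) {B : Set ℕ}
    (hB : B.Infinite) :
    ∃ (a : ℕ → ℕ) (B' : Set ℕ), StrictMono a ∧ StrictMono (L ∘ a) ∧ B' ⊆ B ∧ B'.Infinite ∧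
      ∀ b ∈ B', ∀ i, L (a i) ≠ L b := by
  by_cases hfib : ∃ q, {b | b ∈ B ∧ L b = q}.Infinite
  · obtain ⟨q, hq⟩ := hfib
    obtain ⟨a, ha, hLa, haq⟩ := exists_strictMono_comp_gt L hL q
    exact ⟨a, _, ha, hLa, fun b hb => hb.1, hq, fun b hb i => hb.2 ▸ (haq i).ne'⟩
  push Not at hfib
  have hup : ∀ M, ∃ b ∈ B, M < L b := fun M => by
    by_contra! h
    exact hB (((Set.finite_le_nat M).biUnion fun q _ => hfib q).subset
      fun b hb => Set.mem_biUnion (h b hb) ⟨hb, rfl⟩)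
  obtain ⟨p, hpB, hp⟩ := exists_seq_of_forall_finset_exists
    (fun p : ℕ × ℕ => p.2 ∈ B ∧ L p.1 < L p.2) (fun p p' => p.1 < p'.1 ∧ L p.2 < L p'.1)
    fun s _ => by
      obtain ⟨x, hx, hsx⟩ := (hL (s.sup fun p => L p.2)).exists_gt (s.sup Prod.fst)
      obtain ⟨y, hyB, hy⟩ := hup (L x)
      exact ⟨(x, y), ⟨hyB, hy⟩, fun p hp => ⟨(Finset.le_sup (f := Prod.fst) hp).trans_lt hsx,
        (Finset.le_sup (f := fun p => L p.2) hp).trans_lt hx⟩⟩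
  have hLa : StrictMono (L ∘ fun t => (p t).1) := fun i j h => (hpB i).2.trans (hp i j h).2
  have hLb : StrictMono (L ∘ fun t => (p t).2) := fun i j h => (hp i j h).2.trans (hpB j).2
  refine ⟨fun t => (p t).1, Set.range fun t => (p t).2, fun i j h => (hp i j h).1, hLa,
    Set.range_subset_iff.2 fun t => (hpB t).1,
    Set.infinite_range_of_injective hLb.injective.of_comp, ?_⟩
  rintro _ ⟨t, rfl⟩ i
  rcases le_or_gt i t with h | h
  · exact ((hLa.monotone h).trans_lt (hpB t).2).ne
  · exact (hp t i h).2.ne'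

lemma eventually_exists_eq_ray {V : Type*} {u : ℕ → V} (hu : Function.Injective u) {T : Set V}
    (hT : T.Finite) {f : ℕ → V} (huf : ∀ n, u n ∈ T ∪ Set.range f) (P : ℕ) :
    ∀ᶠ n in Filter.atTop, ∃ k, P ≤ k ∧ u n = f k := by
  have hfin : (T ∪ f '' Set.Iio P).Finite := hT.union ((Set.finite_Iio P).image f)
  filter_upwards [Nat.cofinite_eq_atTop ▸ hu.tendsto_cofinite.eventually
    hfin.eventually_cofinite_notMem] with n hn
  obtain h | ⟨k, hk⟩ := huf n
  · exact absurd (Or.inl h) hn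
  · exact ⟨k, not_lt.1 fun hkP => hn (Or.inr ⟨k, hkP, hk⟩), hk.symm⟩

namespace SimpleGraph

variable {V : Type*} {G : SimpleGraph V}

section TreePath

variable (hG : G.IsTree)

noncomputable def treePath (x y : V) : G.Walk x y :=
  (hG.existsUnique_path x y).exists.choose

lemma treePath_isPath (x y : V) : (treePath hG x y).IsPath :=
  (hG.existsUnique_path x y).exists.choose_spec

variable {hG}

lemma eq_treePath {x y : V} {p : G.Walk x y} (hp : p.IsPath) : p = treePath hG x y :=
  (hG.existsUnique_path x y).unique hp (treePath_isPath hG x y)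

variable (hG) in
/-- `c` lies on the path from `x` to `y`; the endpoints themselves count. -/
def Separates (c x y : V) : Prop := c ∈ (treePath hG x y).support

lemma separates_left (x y : V) : Separates hG x x y := Walk.start_mem_support _

lemma separates_comm {c x y : V} : Separates hG c x y ↔ Separates hG c y x := by
  rw [Separates, Separates, ← eq_treePath (treePath_isPath hG y x).reverse, Walk.support_reverse,
    List.mem_reverse]

lemma Separates.left_or_right {c x z : V} (h : Separates hG c x z) (y : V) :
    Separates hG c x y ∨ Separates hG c y z := by
  classical
  rw [Separates, ← eq_treePath ((treePath hG x y).append (treePath hG y z)).bypass_isPath] at h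
  exact (Walk.mem_support_append_iff _ _).1 (Walk.support_bypass_subset_support _ h)

lemma not_separates_trans {c x y z : V} (hxy : ¬Separates hG c x y) (hyz : ¬Separates hG c y z) :
    ¬Separates hG c x z := fun h => (h.left_or_right y).elim hxy hyz

lemma Separates.trans_left {c x y z : V} (hz : Separates hG z x y) (hc : Separates hG c x z) :
    Separates hG c x y := by
  classical
  rw [Separates, ← eq_treePath ((treePath_isPath hG x y).takeUntil hz)] at hc
  exact Walk.support_takeUntil_subset_support _ hz hc

lemma Separates.trans_right {c x y z : V} (hz : Separates hG z x y) (hc : Separates hG c z y) :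
    Separates hG c x y := by
  classical
  rw [Separates, ← eq_treePath ((treePath_isPath hG x y).dropUntil hz)] at hc
  exact Walk.support_dropUntil_subset_support _ hz hc

lemma Separates.eq_of_separates_of_separates {c x y z : V} (hz : Separates hG z x y)
    (hxz : Separates hG c x z) (hzy : Separates hG c z y) : c = z := by
  classical
  by_contra hcz
  rw [Separates, ← eq_treePath ((treePath_isPath hG x y).takeUntil hz)] at hxz
  rw [Separates, ← eq_treePath ((treePath_isPath hG x y).dropUntil hz),
    ← Walk.cons_tail_support, List.mem_cons] at hzy
  have hnodup := (treePath_isPath hG x y).support_nodup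
  rw [← Walk.take_spec _ hz, Walk.support_append] at hnodup
  exact List.disjoint_of_nodup_append hnodup hxz (hzy.resolve_left hcz)

lemma not_separates_of_separates {c x y z : V} (hzc : z ≠ c) (hx : Separates hG c z x)
    (hy : Separates hG c z y) : ¬Separates hG z x y := fun hz =>
  hzc (hz.eq_of_separates_of_separates (separates_comm.1 hx) hy).symm

lemma exists_adj_not_separates {x y : V} (hxy : x ≠ y) :
    ∃ w, G.Adj x w ∧ ¬Separates hG x w y := by
  cases hp : treePath hG x y with
  | nil => exact absurd rfl hxy
  | cons hadj q =>
    have hq := (Walk.cons_isPath_iff _ _).1 (hp ▸ treePath_isPath hG x y)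
    exact ⟨_, hadj, by rw [Separates, ← eq_treePath hq.1]; exact hq.2⟩

lemma separates_of_adj {x w y : V} (hadj : G.Adj x w) (h : ¬Separates hG x w y) :
    Separates hG w x y := by
  rw [Separates, ← eq_treePath ((Walk.cons_isPath_iff hadj _).2 ⟨treePath_isPath hG w y, h⟩)]
  exact List.mem_cons_of_mem _ (Walk.start_mem_support _)

end TreePath

section Subgraph

variable {H : G.Subgraph}

lemma treePath_toSubgraph_le {hG : G.IsTree} (hc : H.Connected) {x y : V} (hx : x ∈ H.verts)
    (hy : y ∈ H.verts) : (treePath hG x y).toSubgraph ≤ H := by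
  classical
  obtain ⟨q⟩ := hc ⟨x, hx⟩ ⟨y, hy⟩
  have hq : q.bypass.map H.hom = treePath hG x y :=
    eq_treePath (q.bypass_isPath.map Subgraph.hom_injective)
  calc (treePath hG x y).toSubgraph = (q.bypass.map H.hom).toSubgraph :=
        congrArg Walk.toSubgraph hq.symm
    _ = q.bypass.toSubgraph.map H.hom := Walk.toSubgraph_map _ _
    _ ≤ H := ?_
  constructor
  · rintro _ ⟨w, -, rfl⟩
    exact w.2
  · rintro _ _ ⟨a, b, hab, rfl, rfl⟩
    exact q.bypass.toSubgraph.adj_sub hab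

lemma Separates.mem_verts {hG : G.IsTree} (hc : H.Connected) {c x y : V} (h : Separates hG c x y)
    (hx : x ∈ H.verts) (hy : y ∈ H.verts) : c ∈ H.verts :=
  (treePath_toSubgraph_le hc hx hy).1 ((Walk.mem_verts_toSubgraph _).2 h)

lemma Subgraph.Connected.adj_of_adj (hG : G.IsTree) (hc : H.Connected) {x y : V} (hxy : G.Adj x y)
    (hx : x ∈ H.verts) (hy : y ∈ H.verts) : H.Adj x y := by
  have hp : (Walk.cons hxy Walk.nil).IsPath := by simpa using hxy.ne
  have hle := treePath_toSubgraph_le (hG := hG) hc hx hy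
  rw [← eq_treePath hp] at hle
  simpa using hle.2 ((Walk.cons hxy Walk.nil).toSubgraph_adj_getVert (i := 0) (by simp))

end Subgraph

lemma isTree_coe_of_connected (hG : G.IsTree) {T : G.Subgraph} (hc : T.Connected) :
    T.coe.IsTree :=
  ⟨Subgraph.connected_iff'.1 hc, hG.isAcyclic.subgraph T⟩

lemma exists_connected_finite_le (hG : G.IsTree) {H : G.Subgraph} (hc : H.Connected) {r : V}
    (hr : r ∈ H.verts) {s : Set V} (hs : s.Finite) (hsH : s ⊆ H.verts) :
    ∃ T : G.Subgraph, T ≤ H ∧ T.Connected ∧ T.verts.Finite ∧ r ∈ T.verts ∧ s ⊆ T.verts := by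
  induction s, hs using Set.Finite.induction_on with
  | empty =>
    exact ⟨G.singletonSubgraph r, (singletonSubgraph_le_iff _ _).2 hr,
      Subgraph.singletonSubgraph_connected, by simp, by simp, by simp⟩
  | @insert a s _ _ ih =>
    obtain ⟨T, hTH, hTc, hTfin, hrT, hsT⟩ := ih fun v hv => hsH (Set.mem_insert_of_mem a hv)
    have ha := hsH (Set.mem_insert a s)
    refine ⟨T ⊔ (treePath hG r a).toSubgraph, sup_le hTH (treePath_toSubgraph_le hc hr ha),
      Subgraph.connected_sup hTc.preconnected (Walk.toSubgraph_connected _).preconnected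
        ⟨r, hrT, Walk.start_mem_verts_toSubgraph _⟩, ?_, Or.inl hrT, ?_⟩
    · rw [Subgraph.verts_sup, Walk.verts_toSubgraph]
      exact hTfin.union (treePath hG r a).support.finite_toSet
    · exact Set.insert_subset (Or.inr (Walk.end_mem_verts_toSubgraph _)) (hsT.trans le_sup_left)

section Ray

variable {f : ℕ → V} (hf : ∀ n, G.Adj (f n) (f (n + 1)))

def raySubgraph : G.Subgraph where
  verts := Set.range f
  Adj x y := ∃ n, (x = f n ∧ y = f (n + 1)) ∨ (x = f (n + 1) ∧ y = f n)
  adj_sub := by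
    rintro _ _ ⟨n, ⟨rfl, rfl⟩ | ⟨rfl, rfl⟩⟩
    exacts [hf n, (hf n).symm]
  edge_vert := by
    rintro _ _ ⟨n, ⟨rfl, rfl⟩ | ⟨rfl, rfl⟩⟩
    exacts [⟨n, rfl⟩, ⟨n + 1, rfl⟩]
  symm := ⟨fun _ _ ⟨n, h⟩ => ⟨n, h.symm.imp And.symm And.symm⟩⟩

lemma isRaySubgraph_raySubgraph (hinj : Function.Injective f) :
    IsRaySubgraph (raySubgraph hf) :=
  ⟨f, hinj, rfl, fun _ _ => Iff.rfl⟩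

lemma raySubgraph_connected : (raySubgraph hf).Connected := by
  have hreach : ∀ n, (raySubgraph hf).coe.Reachable ⟨f 0, 0, rfl⟩ ⟨f n, n, rfl⟩ := by
    intro n
    induction n with
    | zero => rfl
    | succ n ih => exact ih.trans (Adj.reachable ⟨n, Or.inl ⟨rfl, rfl⟩⟩)
  rw [Subgraph.connected_iff', connected_iff_exists_forall_reachable]
  refine ⟨⟨f 0, 0, rfl⟩, ?_⟩
  rintro ⟨_, n, rfl⟩
  exact hreach n

lemma raySubgraph_le (hG : G.IsTree) {H : G.Subgraph} (hc : H.Connected)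
    (hfH : ∀ n, f n ∈ H.verts) : raySubgraph hf ≤ H := by
  refine ⟨?_, ?_⟩
  · rintro _ ⟨n, rfl⟩
    exact hfH n
  · rintro _ _ ⟨n, ⟨rfl, rfl⟩ | ⟨rfl, rfl⟩⟩
    · exact hc.adj_of_adj hG (hf n) (hfH n) (hfH (n + 1))
    · exact hc.adj_of_adj hG (hf n).symm (hfH (n + 1)) (hfH n)

def rayWalk (i : ℕ) : (k : ℕ) → G.Walk (f i) (f (i + k))
  | 0 => Walk.nil
  | k + 1 => (rayWalk i k).concat (hf (i + k))

lemma mem_support_rayWalk {i k : ℕ} {c : V} :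
    c ∈ (rayWalk hf i k).support ↔ ∃ j ≤ k, c = f (i + j) := by
  induction k with
  | zero => simp [rayWalk]
  | succ k ih =>
    simp only [rayWalk, Walk.support_concat, List.mem_append, ih, List.mem_singleton,
      Nat.le_succ_iff, or_and_right, exists_or, exists_eq_left]

lemma isPath_rayWalk (hinj : Function.Injective f) (i k : ℕ) : (rayWalk hf i k).IsPath := by
  induction k with
  | zero => exact Walk.IsPath.nil
  | succ k ih =>
    refine (Walk.concat_isPath_iff _).2 ⟨ih, fun h => ?_⟩
    obtain ⟨j, hj, hfj⟩ := (mem_support_rayWalk hf).1 h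
    have := hinj hfj
    omega

end Ray

section LabelDist

open Classical in
noncomputable def labelDist (hG : G.IsTree) (l : V → ℝ) (x y : V) : ℝ :=
  if x = y then 0 else sSup (l '' {w | w ∈ (treePath hG x y).support})

lemma isLabelDist_labelDist (hG : G.IsTree) (l : V → ℝ) : IsLabelDist G l (labelDist hG l) := by
  refine ⟨fun v => if_pos rfl, fun x y hxy p hp => ?_⟩
  rw [eq_treePath (hG := hG) hp, labelDist, if_neg hxy]
  have hfin : (l '' {w | w ∈ (treePath hG x y).support}).Finite :=
    (treePath hG x y).support.finite_toSet.image l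
  exact ⟨Set.Nonempty.csSup_mem ⟨l x, x, Walk.start_mem_support _, rfl⟩ hfin,
    fun _ hb => le_csSup hfin.bddAbove hb⟩

variable {l : V → ℝ} {d : V → V → ℝ}

lemma _root_.IsLabelDist.le (hd : IsLabelDist G l d) {x y w : V} (hxy : x ≠ y) {p : G.Walk x y}
    (hp : p.IsPath) (hw : w ∈ p.support) : l w ≤ d x y :=
  (hd.2 x y hxy p hp).2 ⟨w, hw, rfl⟩

lemma _root_.IsLabelDist.exists_eq (hd : IsLabelDist G l d) {x y : V} (hxy : x ≠ y) {p : G.Walk x y}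
    (hp : p.IsPath) : ∃ w ∈ p.support, l w = d x y :=
  (hd.2 x y hxy p hp).1

lemma _root_.IsLabelDist.symm (hG : G.IsTree) (hd : IsLabelDist G l d) (x y : V) :
    d x y = d y x := by
  rcases eq_or_ne x y with rfl | hxy
  · rfl
  have hyx := hd.2 y x hxy.symm _ (treePath_isPath hG x y).reverse
  simp only [Walk.support_reverse, List.mem_reverse] at hyx
  exact (hd.2 x y hxy _ (treePath_isPath hG x y)).unique hyx

variable {f : ℕ → V} (hf : ∀ n, G.Adj (f n) (f (n + 1))) (hinj : Function.Injective f)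
include hf hinj

lemma _root_.IsLabelDist.le_of_ray (hd : IsLabelDist G l d) {i j t : ℕ} (ht : 0 < t) (hij : i ≤ j)
    (hjt : j ≤ i + t) : l (f j) ≤ d (f i) (f (i + t)) :=
  hd.le (hinj.ne (by omega)) (isPath_rayWalk hf hinj i t)
    ((mem_support_rayWalk hf).2 ⟨j - i, by omega, by congr 1; omega⟩)

lemma _root_.IsLabelDist.lt_of_ray (hG : G.IsTree) (hd : IsLabelDist G l d) {ε : ℝ} (hε : 0 < ε)
    {s : ℕ} (hs : ∀ j ≥ s, l (f j) < ε) {p q : ℕ} (hp : s ≤ p) (hq : s ≤ q) :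
    d (f p) (f q) < ε := by
  wlog hpq : p ≤ q generalizing p q
  · rw [hd.symm hG]
    exact this hq hp (by omega)
  obtain ⟨t, rfl⟩ := Nat.exists_eq_add_of_le hpq
  rcases Nat.eq_zero_or_pos t with rfl | ht
  · rw [add_zero, hd.1]
    exact hε
  obtain ⟨w, hw, hlw⟩ := hd.exists_eq (hinj.ne (by omega)) (isPath_rayWalk hf hinj p t)
  obtain ⟨j, hj, rfl⟩ := (mem_support_rayWalk hf).1 hw
  exact hlw ▸ hs _ (by omega)

end LabelDist

section TailLabel

variable (hG : G.IsTree) (x : ℕ → V)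

def tailHull (k : ℕ) : Set V := {v | ∃ i ≥ k, ∃ j ≥ k, Separates hG v (x i) (x j)}

open Classical in
noncomputable def tailLabel (v : V) : ℝ :=
  if h : ∃ k, v ∉ tailHull hG x k then 1 / (Nat.find h + 1) else 0

variable {hG x}

lemma tailHull_antitone : Antitone (tailHull hG x) :=
  fun _ _ h _ ⟨i, hi, j, hj, hv⟩ => ⟨i, h.trans hi, j, h.trans hj, hv⟩

lemma tailLabel_nonneg (v : V) : 0 ≤ tailLabel hG x v := by
  unfold tailLabel
  split <;> positivity

lemma tailLabel_pos {v : V} (h : ∃ k, v ∉ tailHull hG x k) : 0 < tailLabel hG x v := by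
  rw [tailLabel, dif_pos h]
  positivity

lemma tailLabel_le {v : V} {k : ℕ} (hv : v ∈ tailHull hG x k) :
    tailLabel hG x v ≤ 1 / (k + 1) := by
  classical
  unfold tailLabel
  split_ifs with h
  · have : k ≤ Nat.find h :=
      (Nat.le_find_iff _ _).2 fun m hm hmv => hmv (tailHull_antitone hm.le hv)
    gcongr
  · positivity

lemma tailLabel_eq_one {v : V} (hv : v ∉ tailHull hG x 0) : tailLabel hG x v = 1 := by
  classical
  have h : ∃ k, v ∉ tailHull hG x k := ⟨0, hv⟩
  rw [tailLabel, dif_pos h, (Nat.find_eq_zero h).2 hv]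
  norm_num

lemma cauchyWith_of_tailLabel {d : V → V → ℝ} (hd : IsLabelDist G (tailLabel hG x) d) :
    CauchyWith d x := by
  intro ε hε
  obtain ⟨N, hN⟩ := exists_nat_one_div_lt hε
  refine ⟨N, fun i hi j hj => ?_⟩
  rcases eq_or_ne (x i) (x j) with h | h
  · rw [h, hd.1]
    exact hε
  obtain ⟨w, hw, hlw⟩ := hd.exists_eq h (treePath_isPath hG _ _)
  calc d (x i) (x j) = tailLabel hG x w := hlw.symm
    _ ≤ 1 / (N + 1) := tailLabel_le ⟨i, hi, j, hj, hw⟩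
    _ < ε := hN

end TailLabel

variable (hG : G.IsTree) in
/-- The labeling `tailLabel hG (u ∘ a)` makes `u ∘ a` Cauchy, is non-degenerate by the last
condition, and gives label `1` to every `u b` with `b ∈ B`. -/
def HasCauchyObstruction (u : ℕ → V) : Prop :=
  ∃ (a : ℕ → ℕ) (B : Set ℕ), StrictMono a ∧ B.Infinite ∧
    (∀ b ∈ B, u b ∉ tailHull hG (u ∘ a) 0) ∧
    ∀ v w, G.Adj v w → (∃ k, v ∉ tailHull hG (u ∘ a) k) ∨ ∃ k, w ∉ tailHull hG (u ∘ a) k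

lemma HasCauchyObstruction.exists_labeling {hG : G.IsTree} {u : ℕ → V}
    (hu : Function.Injective u) (h : HasCauchyObstruction hG u) :
    ∃ l : V → ℝ, (∀ w, 0 ≤ l w) ∧ NondegenerateLabeling G l ∧ ∃ d, IsLabelDist G l d ∧
      (∃ φ, StrictMono φ ∧ CauchyWith d (u ∘ φ)) ∧ ¬CauchyWith d u := by
  obtain ⟨a, B, ha, hB, hBout, hadj⟩ := h
  have hd := isLabelDist_labelDist hG (tailLabel hG (u ∘ a))
  refine ⟨_, tailLabel_nonneg, fun v w hvw => ?_, _, hd, ⟨a, ha, cauchyWith_of_tailLabel hd⟩,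
    fun hC => ?_⟩
  · rcases hadj v w hvw with h | h
    exacts [lt_max_of_lt_left (tailLabel_pos h), lt_max_of_lt_right (tailLabel_pos h)]
  · obtain ⟨N, hN⟩ := hC 1 one_pos
    obtain ⟨b, hbB, hbN⟩ := hB.exists_gt N
    have hle := hd.le (hu.ne (by omega : b ≠ b + 1)) (treePath_isPath hG _ _)
      (separates_left _ _)
    rw [tailLabel_eq_one (hBout b hbB)] at hle
    exact (hN b hbN.le (b + 1) (by omega)).not_ge hle

section Star

variable {hG : G.IsTree} {u : ℕ → V}

lemma exists_not_separates_of_mem_tailHull {x : ℕ → V} {v c : V} {k : ℕ}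
    (hv : v ∈ tailHull hG x k) (hvc : v ≠ c) : ∃ i ≥ k, ¬Separates hG c v (x i) := by
  obtain ⟨i, hi, j, hj, hv⟩ := hv
  by_contra! h
  exact hvc (hv.eq_of_separates_of_separates (separates_comm.1 (h i hi)) (h j hj)).symm

lemma hasCauchyObstruction_of_star {c : V} {g : ℕ → ℕ} (hg : StrictMono g)
    (hgc : ∀ i, u (g i) ≠ c) (hsep : Pairwise fun i j => Separates hG c (u (g i)) (u (g j))) :
    HasCauchyObstruction hG u := by
  have hcore : ∀ v, (∀ k, v ∈ tailHull hG (u ∘ fun i => g (2 * i)) k) → v = c := by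
    intro v hv
    by_contra hvc
    obtain ⟨i, -, hi⟩ := exists_not_separates_of_mem_tailHull (hv 0) hvc
    obtain ⟨j, hj, hj'⟩ := exists_not_separates_of_mem_tailHull (hv (i + 1)) hvc
    exact not_separates_trans (separates_comm.not.1 hi) hj' (hsep (by omega : 2 * i ≠ 2 * j))
  refine ⟨fun i => g (2 * i), Set.range fun t => g (2 * t + 1), fun i j hij => hg (by omega),
    Set.infinite_range_of_injective fun s t hst => by have := hg.injective hst; omega, ?_,
    fun v w hvw => ?_⟩
  · rintro _ ⟨t, rfl⟩ ⟨i, -, j, -, h⟩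
    exact not_separates_of_separates (hgc _) (hsep (by omega)) (hsep (by omega)) h
  · by_contra! h
    exact hvw.ne ((hcore v h.1).trans (hcore w h.2).symm)

variable (hG) in
/-- The indices in `S` of vertices in the component of `G - c` containing `w`, other than `w`. -/
def branchSet (u : ℕ → V) (c w : V) (S : Set ℕ) : Set ℕ :=
  {n | n ∈ S ∧ ¬Separates hG c (u n) w ∧ u n ≠ w}

lemma exists_star_or_branch (hu : Function.Injective u) (c : V) {S : Set ℕ} (hS : S.Infinite)
    (hSc : ∀ n ∈ S, u n ≠ c) :
    (∃ g : ℕ → ℕ, StrictMono g ∧ (∀ i, u (g i) ≠ c) ∧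
        Pairwise fun i j => Separates hG c (u (g i)) (u (g j))) ∨
      ∃ w, G.Adj c w ∧ (branchSet hG u c w S).Infinite := by
  by_cases h : ∃ n₀ ∈ S, {n | n ∈ S ∧ ¬Separates hG c (u n) (u n₀)}.Infinite
  · right
    obtain ⟨n₀, hn₀, hinf⟩ := h
    obtain ⟨w, hcw, hw⟩ := exists_adj_not_separates (hG := hG) (hSc n₀ hn₀).symm
    refine ⟨w, hcw, (hinf.sdiff ((Set.finite_singleton w).preimage hu.injOn)).mono ?_⟩
    rintro n ⟨⟨hnS, hn⟩, hnw⟩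
    exact ⟨hnS, not_separates_trans hn (separates_comm.not.1 hw), hnw⟩
  · left
    push Not at h
    obtain ⟨g, hgS, hg⟩ := exists_seq_of_forall_finset_exists (· ∈ S)
      (fun m n => m < n ∧ Separates hG c (u m) (u n)) fun s hs => by
        have hfin : (⋃ m ∈ s, {n | n ∈ S ∧ ¬Separates hG c (u n) (u m)}).Finite :=
          s.finite_toSet.biUnion fun m hm => h m (hs m hm)
        obtain ⟨y, ⟨hyS, hy⟩, hsy⟩ := (hS.sdiff hfin).exists_gt (s.sup id)
        refine ⟨y, hyS, fun m hm => ⟨(Finset.le_sup (f := id) hm).trans_lt hsy, ?_⟩⟩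
        by_contra hsep
        exact hy (Set.mem_biUnion hm ⟨hyS, separates_comm.not.1 hsep⟩)
    refine ⟨g, fun i j hij => (hg i j hij).1, fun i => hSc _ (hgS i), fun i j hij => ?_⟩
    rcases hij.lt_or_gt with h | h
    exacts [(hg i j h).2, separates_comm.1 (hg j i h).2]

end Star

variable (hG : G.IsTree) (u : ℕ → V) in
/-- A ray `r` from `u 0` along which `S k` indexes the terms of `u` lying beyond `r k`. -/
structure BranchRay where
  r : ℕ → V
  S : ℕ → Set ℕ
  r_zero : r 0 = u 0
  S_zero : S 0 = {n | u n ≠ u 0}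
  S_succ : ∀ k, S (k + 1) = branchSet hG u (r k) (r (k + 1)) (S k)
  adj : ∀ k, G.Adj (r k) (r (k + 1))
  infinite : ∀ k, (S k).Infinite

namespace BranchRay

variable {hG : G.IsTree} {u : ℕ → V}

lemma nonempty (hu : Function.Injective u)
    (hbranch : ∀ c S, S.Infinite → (∀ n ∈ S, u n ≠ c) →
      ∃ w, G.Adj c w ∧ (branchSet hG u c w S).Infinite) :
    Nonempty (BranchRay hG u) := by
  let State := {p : V × Set ℕ // p.2.Infinite ∧ ∀ n ∈ p.2, u n ≠ p.1}
  choose next hnext using fun p : State => hbranch p.1.1 p.1.2 p.2.1 p.2.2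
  let step : State → State := fun p =>
    ⟨(next p, branchSet hG u p.1.1 (next p) p.1.2), (hnext p).2, fun _ hn => hn.2.2⟩
  have hinit : {n | u n ≠ u 0}.Infinite :=
    ((Set.finite_singleton (u 0)).preimage hu.injOn).infinite_compl
  let st : ℕ → State := fun k => step^[k] ⟨(u 0, {n | u n ≠ u 0}), hinit, fun _ hn => hn⟩
  have hst : ∀ k, st (k + 1) = step (st k) := fun k => Function.iterate_succ_apply' step k _
  exact ⟨{ r := fun k => (st k).1.1
           S := fun k => (st k).1.2
           r_zero := rfl
           S_zero := rfl
           S_succ := fun k => by simp only [hst]; rfl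
           adj := fun k => by simp only [hst]; exact (hnext _).1
           infinite := fun k => (st k).2.1 }⟩

variable (D : BranchRay hG u)

lemma S_succ_subset (k : ℕ) : D.S (k + 1) ⊆ D.S k := by
  rw [D.S_succ]
  exact fun _ hn => hn.1

lemma antitone : Antitone D.S := antitone_nat_of_succ_le D.S_succ_subset

lemma not_separates_succ {k n : ℕ} (hn : n ∈ D.S (k + 1)) :
    ¬Separates hG (D.r k) (u n) (D.r (k + 1)) := by
  rw [D.S_succ] at hn
  exact hn.2.1

lemma separates_succ {k n : ℕ} (hn : n ∈ D.S (k + 1)) : Separates hG (D.r (k + 1)) (D.r k) (u n) :=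
  separates_of_adj (D.adj k) (separates_comm.not.1 (D.not_separates_succ hn))

lemma separates_of_drop {k n m : ℕ} (hn : n ∈ D.S k) (hn' : n ∉ D.S (k + 1))
    (hnr : u n ≠ D.r (k + 1)) (hm : m ∈ D.S (k + 1)) : Separates hG (D.r k) (u n) (u m) := by
  have hsep : Separates hG (D.r k) (u n) (D.r (k + 1)) := by
    by_contra h
    exact hn' (D.S_succ k ▸ ⟨hn, h, hnr⟩)
  by_contra h
  exact not_separates_trans h (D.not_separates_succ hm) hsep

lemma separates_of_le {i j n : ℕ} (hij : i ≤ j) (hn : n ∈ D.S j) :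
    Separates hG (D.r j) (D.r i) (u n) := by
  induction j, hij using Nat.le_induction with
  | base => exact separates_left _ _
  | succ j _ ih => exact (ih (D.S_succ_subset j hn)).trans_right (D.separates_succ hn)

lemma injective : Function.Injective D.r := by
  refine .of_lt_imp_ne fun i j hij he => ?_
  obtain ⟨n, hn⟩ := (D.infinite j).nonempty
  have h := D.separates_of_le hij hn
  rw [← he] at h
  exact D.not_separates_succ (D.antitone hij hn) (separates_comm.1 h)

lemma exists_not_mem (n : ℕ) : ∃ k, n ∉ D.S k := by
  by_contra! h
  refine Set.infinite_range_of_injective D.injective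
    ((treePath hG (D.r 0) (u n)).support.finite_toSet.subset ?_)
  rintro _ ⟨j, rfl⟩
  exact D.separates_of_le (Nat.zero_le j) (h j)

lemma not_separates_of_lt {j k n m : ℕ} (hjk : j < k) (hn : n ∈ D.S k) (hm : m ∈ D.S k) :
    ¬Separates hG (D.r j) (u n) (u m) :=
  not_separates_trans (D.not_separates_succ (D.antitone hjk hn))
    (separates_comm.not.1 (D.not_separates_succ (D.antitone hjk hm)))

/-- Otherwise `r 0, …, r (k - 1)` would all lie on the path from `r 0` to `v`, which has fewer
than `k` vertices. -/
lemma exists_forall_not_separates (v : V) :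
    ∃ k, ∀ n ∈ D.S k, ∀ m ∈ D.S k, ¬Separates hG v (u n) (u m) := by
  classical
  let L := (treePath hG (D.r 0) v).support
  refine ⟨L.length + 1, fun n hn m hm hv => ?_⟩
  have hsub : (Finset.range (L.length + 1)).image D.r ⊆ L.toFinset := by
    intro w hw
    obtain ⟨j, hj, rfl⟩ := Finset.mem_image.1 hw
    have hjk : j < L.length + 1 := Finset.mem_range.1 hj
    rw [List.mem_toFinset]
    have hr := D.separates_of_le (Nat.zero_le j) (D.antitone hjk.le hn)
    exact (hr.left_or_right v).resolve_right fun h => D.not_separates_of_lt hjk hn hm (hv.trans_left (separates_comm.1 h))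
  have hcard := (Finset.card_le_card hsub).trans L.toFinset_card_le
  rw [Finset.card_image_of_injective _ D.injective, Finset.card_range] at hcard
  omega

open Classical in
noncomputable def level (n : ℕ) : ℕ := Nat.find (D.exists_not_mem n)

lemma mem_S_iff_lt_level {k n : ℕ} : n ∈ D.S k ↔ k < D.level n := by
  classical
  constructor
  · intro hn
    by_contra! h
    exact Nat.find_spec (D.exists_not_mem n) (D.antitone h hn)
  · intro h
    by_contra hn
    exact Nat.find_min (D.exists_not_mem n) h hn

lemma separates_of_not_mem {k n m : ℕ} (hn : n ∉ D.S k) (hm : m ∈ D.S k) :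
    Separates hG (D.r k) (u n) (u m) := by
  induction k with
  | zero =>
    rw [D.S_zero, Set.mem_ofPred_eq, not_not] at hn
    rw [D.r_zero, ← hn]
    exact separates_left _ _
  | succ k ih =>
    have hm' := D.S_succ_subset k hm
    by_cases hnr : u n = D.r (k + 1)
    · rw [hnr]
      exact separates_left _ _
    have hk : Separates hG (D.r k) (u n) (u m) := by
      by_cases hnk : n ∈ D.S k
      · exact D.separates_of_drop hnk hn hnr hm
      · exact ih hnk hm'
    exact hk.trans_right (D.separates_succ hm)

lemma separates_of_level_ne {b n : ℕ} (hb : u b ∉ Set.range D.r) (h : D.level n ≠ D.level b) :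
    Separates hG (D.r (D.level b - 1)) (u b) (u n) := by
  have hb0 : b ∈ D.S 0 := by
    rw [D.S_zero]
    exact fun h' => hb ⟨0, D.r_zero.trans h'.symm⟩
  obtain ⟨m, hm⟩ : ∃ m, D.level b = m + 1 :=
    ⟨D.level b - 1, by have := D.mem_S_iff_lt_level.1 hb0; omega⟩
  rw [hm, Nat.add_sub_cancel]
  have hbm : b ∈ D.S m := D.mem_S_iff_lt_level.2 (by omega)
  have hbm' : b ∉ D.S (m + 1) := fun h' => by have := D.mem_S_iff_lt_level.1 h'; omega
  rcases h.lt_or_gt with hlt | hgt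
  · refine separates_comm.1 (D.separates_of_not_mem (fun h' => ?_) hbm)
    have := D.mem_S_iff_lt_level.1 h'
    omega
  · exact D.separates_of_drop hbm hbm' (fun h' => hb ⟨_, h'.symm⟩)
      (D.mem_S_iff_lt_level.2 (by omega))

lemma r_mem_verts {H : G.Subgraph} (hc : H.Connected) (huH : ∀ n, u n ∈ H.verts) (j : ℕ) :
    D.r j ∈ H.verts := by
  obtain ⟨n, hn⟩ := (D.infinite j).nonempty
  exact (D.separates_of_le (Nat.zero_le j) hn).mem_verts hc (D.r_zero ▸ huH 0) (huH n)

lemma hasCauchyObstruction (hOff : {n | u n ∉ Set.range D.r}.Infinite) :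
    HasCauchyObstruction hG u := by
  obtain ⟨a, B, ha, hLa, hBOff, hB, hne⟩ := exists_strictMono_level_ne D.level
    (fun k => (D.infinite k).mono fun _ hn => D.mem_S_iff_lt_level.1 hn) hOff
  refine ⟨a, B, ha, hB, fun b hb ⟨i, _, j, _, h⟩ => ?_, fun v _ _ => Or.inl ?_⟩
  · have hbOff : u b ∉ Set.range D.r := hBOff hb
    exact not_separates_of_separates (fun h' => hbOff ⟨_, h'.symm⟩)
      (D.separates_of_level_ne hbOff (hne b hb i)) (D.separates_of_level_ne hbOff (hne b hb j)) h
  · obtain ⟨k, hk⟩ := D.exists_forall_not_separates v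
    have hdeep : ∀ i ≥ k + 1, a i ∈ D.S k := fun i hi =>
      D.mem_S_iff_lt_level.2 (by have : i ≤ D.level (a i) := hLa.id_le i; omega)
    exact ⟨k + 1, fun ⟨i, hi, j, hj, h⟩ => hk _ (hdeep i hi) _ (hdeep j hj) h⟩

lemma isAlmostRaySubgraph {H : G.Subgraph} (hH : IsConvexHullSubtree G (Set.range u) H)
    (hOff : {n | u n ∉ Set.range D.r}.Finite) : IsAlmostRaySubgraph H := by
  have hc : H.Connected := Subgraph.connected_iff'.2 hH.1.connected
  have huH : ∀ n, u n ∈ H.verts := fun n => hH.2.1 ⟨n, rfl⟩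
  obtain ⟨T, hTH, hTc, hTfin, hu0T, hOffT⟩ := exists_connected_finite_le hG hc (huH 0)
    (hOff.image u) (Set.image_subset_iff.2 fun n _ => huH n)
  have hsup : (T ⊔ raySubgraph D.adj).Connected :=
    Subgraph.connected_sup hTc.preconnected (raySubgraph_connected D.adj).preconnected
      ⟨u 0, hu0T, 0, D.r_zero⟩
  have hrange : Set.range u ⊆ (T ⊔ raySubgraph D.adj).verts := by
    rintro _ ⟨n, rfl⟩
    by_cases hn : u n ∈ Set.range D.r
    · exact Or.inr hn
    · exact Or.inl (hOffT ⟨n, hn, rfl⟩)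
  exact ⟨raySubgraph D.adj, T, isRaySubgraph_raySubgraph D.adj D.injective,
    ⟨hTfin, isTree_coe_of_connected hG hTc⟩,
    le_antisymm (sup_le hTH (raySubgraph_le D.adj hG hc (D.r_mem_verts hc huH)))
      (hH.2.2 _ (isTree_coe_of_connected hG hsup) hrange)⟩

end BranchRay

lemma isAlmostRaySubgraph_or_hasCauchyObstruction (hG : G.IsTree) {u : ℕ → V}
    (hu : Function.Injective u) {H : G.Subgraph} (hH : IsConvexHullSubtree G (Set.range u) H) :
    IsAlmostRaySubgraph H ∨ HasCauchyObstruction hG u := by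
  by_cases hstar : ∃ (c : V) (g : ℕ → ℕ), StrictMono g ∧ (∀ i, u (g i) ≠ c) ∧
      Pairwise fun i j => Separates hG c (u (g i)) (u (g j))
  · obtain ⟨c, g, hg, hgc, hsep⟩ := hstar
    exact Or.inr (hasCauchyObstruction_of_star hg hgc hsep)
  obtain ⟨D⟩ := BranchRay.nonempty hu fun c _ hS hSc =>
    (exists_star_or_branch hu c hS hSc).resolve_left fun h => hstar ⟨c, h⟩
  rcases Set.finite_or_infinite {n | u n ∉ Set.range D.r} with hOff | hOff
  exacts [Or.inl (D.isAlmostRaySubgraph hH hOff), Or.inr (D.hasCauchyObstruction hOff)]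

lemma cauchyWith_of_isAlmostRaySubgraph (hG : G.IsTree) {u : ℕ → V} (hu : Function.Injective u)
    {H : G.Subgraph} (huH : Set.range u ⊆ H.verts) (hAR : IsAlmostRaySubgraph H)
    {l : V → ℝ} {d : V → V → ℝ} (hd : IsLabelDist G l d) {φ : ℕ → ℕ} (hφ : StrictMono φ)
    (hC : CauchyWith d (u ∘ φ)) : CauchyWith d u := by
  obtain ⟨R, T₀, ⟨f, hinj, hRverts, hRadj⟩, ⟨hT₀fin, -⟩, rfl⟩ := hAR
  have hf : ∀ n, G.Adj (f n) (f (n + 1)) :=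
    fun n => R.adj_sub ((hRadj _ _).2 ⟨n, Or.inl ⟨rfl, rfl⟩⟩)
  have hpos := eventually_exists_eq_ray hu hT₀fin fun n => by
    simpa only [Subgraph.verts_sup, hRverts] using huH ⟨n, rfl⟩
  intro ε hε
  obtain ⟨N, hN⟩ := hC ε hε
  have hsub : ∀ P, ∃ k ≥ N, ∃ t ≥ P, u (φ k) = f t := fun P =>
    ((hφ.tendsto_atTop.eventually (hpos P)).and (Filter.eventually_ge_atTop N)).exists.imp
      fun _ ⟨⟨t, ht, he⟩, hk⟩ => ⟨hk, t, ht, he⟩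
  obtain ⟨K, hK, s, -, hs⟩ := hsub 0
  have hsmall : ∀ j ≥ s, l (f j) < ε := fun j hj => by
    obtain ⟨k, hk, t, ht, hkt⟩ := hsub (j + 1)
    obtain ⟨t, rfl⟩ : ∃ t', t = s + t' := ⟨t - s, by omega⟩
    calc l (f j) ≤ d (f s) (f (s + t)) := hd.le_of_ray hf hinj (by omega) hj (by omega)
      _ = d (u (φ K)) (u (φ k)) := by rw [hs, hkt]
      _ < ε := hN K hK k hk
  obtain ⟨M, hM⟩ := (hpos s).exists_forall_of_atTop
  refine ⟨M, fun m hm n hn => ?_⟩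
  obtain ⟨p, hp, hmp⟩ := hM m hm
  obtain ⟨q, hq, hnq⟩ := hM n hn
  rw [hmp, hnq]
  exact hd.lt_of_ray hf hinj hG hε hsmall hp hq

end SimpleGraph

/-- Let `u` be a sequence of pairwise distinct vertices of a tree `T` and
let `H` be the convex hull of its range. Then `H` is almost a ray iff, for every
non-degenerate labeling `l`, the existence of a Cauchy subsequence of `u` in
`(V(T), d_l)` implies that `u` itself is Cauchy in `(V(T), d_l)`. -/
theorem stmt8 {V : Type*} (G : SimpleGraph V) (hG : G.IsTree)
    (u : ℕ → V) (hu : Function.Injective u)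
    (H : G.Subgraph) (hH : IsConvexHullSubtree G (Set.range u) H) :
    IsAlmostRaySubgraph H ↔
      ∀ l : V → ℝ, (∀ w, 0 ≤ l w) → NondegenerateLabeling G l →
        ∀ d : V → V → ℝ, IsLabelDist G l d →
          (∃ φ : ℕ → ℕ, StrictMono φ ∧ CauchyWith d (u ∘ φ)) → CauchyWith d u := by
  constructor
  · rintro hAR l - - d hd ⟨φ, hφ, hC⟩
    exact cauchyWith_of_isAlmostRaySubgraph hG hu hH.2.1 hAR hd hφ hC
  · intro h
    refine (isAlmostRaySubgraph_or_hasCauchyObstruction hG hu hH).resolve_right fun hobs => ?_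
    obtain ⟨l, hl, hnd, d, hd, hsub, hnot⟩ := hobs.exists_labeling hu
    exact hnot (h l hl hnd d hd hsub)
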